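/- Let T be an order-N real tensor with dimensions s₁×⋯×s_N with I(T) > 0, and let M ∈ ℝ^{s_N×R} with R ≤ s_N and I(M) := inf_{‖x‖₂=1} ‖Mx‖₂ > 0, with condition number κ(M) = ‖M‖₂/I(M). Let V = T ×_N Mᵀ, the order-N tensor with entries V(i₁,…,i_{N−1},r) = Σ_{i_N} T(i₁,…,i_N) M(i_N,r). Then κ(V) ≤ κ(T) · κ(M). -/
import Mathlib


open scoped BigOperators

/-- Euclidean (ℓ²) norm of a vector. -/
noncomputable def vnorm {n : ℕ} (v : Fin n → ℝ) : ℝ := Real.sqrt (∑ i, v i ^ 2)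

/-- Frobenius norm: the ℓ² norm of all entries. -/
noncomputable def fnorm {ι : Type*} [Fintype ι] (T : ι → ℝ) : ℝ := Real.sqrt (∑ i, T i ^ 2)

/-- Matrix–vector product. -/
noncomputable def matvec {m n : ℕ} (M : Fin m → Fin n → ℝ) (x : Fin n → ℝ) : Fin m → ℝ :=
  fun i => ∑ j, M i j * x j

/-- Matrix–matrix product. -/
noncomputable def matmul {m n p : ℕ} (A : Fin m → Fin n → ℝ) (B : Fin n → Fin p → ℝ) :
    Fin m → Fin p → ℝ :=
  fun i j => ∑ k, A i k * B k j

/-- Matrix spectral norm. -/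
noncomputable def mnorm {m n : ℕ} (M : Fin m → Fin n → ℝ) : ℝ :=
  sSup {r | ∃ x : Fin n → ℝ, vnorm x = 1 ∧ r = vnorm (matvec M x)}

/-- `I(M)`: the infimum of `‖Mx‖₂` over unit vectors `x`. -/
noncomputable def minf {m n : ℕ} (M : Fin m → Fin n → ℝ) : ℝ :=
  sInf {r | ∃ x : Fin n → ℝ, vnorm x = 1 ∧ r = vnorm (matvec M x)}

/-- Matrix Frobenius norm. -/
noncomputable def mfro {m n : ℕ} (M : Fin m → Fin n → ℝ) : ℝ :=
  Real.sqrt (∑ i, ∑ j, M i j ^ 2)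

/-- The multilinear map `g_T` associated to an order-`(d+1)` tensor `T`;
mode `0` is the output mode, modes `1,…,d` are the input modes. -/
noncomputable def gmap {d : ℕ} {s : Fin (d+1) → ℕ} (T : (∀ i, Fin (s i)) → ℝ)
    (x : ∀ i, Fin (s i) → ℝ) : Fin (s 0) → ℝ :=
  fun i₁ => ∑ j : (∀ i, Fin (s i)),
    if j 0 = i₁ then T j * ∏ k ∈ Finset.univ.erase (0 : Fin (d+1)), x k (j k) else 0

/-- The inputs `x i`, `i ≠ 0`, are all unit vectors. -/
def unitInputs {d : ℕ} {s : Fin (d+1) → ℕ} (x : ∀ i, Fin (s i) → ℝ) : Prop :=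
  ∀ i : Fin (d+1), i ≠ 0 → vnorm (x i) = 1

/-- Tensor spectral norm: supremum of `‖g_T(x₂,…,x_N)‖₂` over unit inputs. -/
noncomputable def tnorm {d : ℕ} {s : Fin (d+1) → ℕ} (T : (∀ i, Fin (s i)) → ℝ) : ℝ :=
  sSup {r | ∃ x : (∀ i, Fin (s i) → ℝ), unitInputs x ∧ r = vnorm (gmap T x)}

/-- `I(T)`: infimum of `‖g_T(x₂,…,x_N)‖₂` over unit inputs. -/
noncomputable def tinf {d : ℕ} {s : Fin (d+1) → ℕ} (T : (∀ i, Fin (s i)) → ℝ) : ℝ :=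
  sInf {r | ∃ x : (∀ i, Fin (s i) → ℝ), unitInputs x ∧ r = vnorm (gmap T x)}

/-- Tensor condition number `κ(T) = ‖T‖₂ / I(T)`. -/
noncomputable def tcond {d : ℕ} {s : Fin (d+1) → ℕ} (T : (∀ i, Fin (s i)) → ℝ) : ℝ :=
  tnorm T / tinf T

/-- Dimensions after replacing the size of mode `n` by `J`. -/
def repl {d : ℕ} (s : Fin (d+1) → ℕ) (n : Fin (d+1)) (J : ℕ) : Fin (d+1) → ℕ :=
  fun i => if i = n then J else s i

/-- Mode-`n` product `T ×ₙ A` with a matrix `A : Fin J → Fin (s n) → ℝ`: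
`(T ×ₙ A)(i₁,…,a,…,i_N) = ∑ₖ T(i₁,…,k,…,i_N) A(a,k)`. -/
noncomputable def modeProd {d : ℕ} {s : Fin (d+1) → ℕ} (T : (∀ i, Fin (s i)) → ℝ)
    (n : Fin (d+1)) {J : ℕ} (A : Fin J → Fin (s n) → ℝ) :
    (∀ i, Fin (repl s n J i)) → ℝ :=
  fun j => ∑ k : Fin (s n),
    T (fun i => if h : i = n then Fin.cast (congrArg s h.symm) k
        else Fin.cast (show repl s n J i = s i by simp [repl, h]) (j i)) *
      A (Fin.cast (show repl s n J n = J by simp [repl]) (j n)) k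

/-- Multilinear transformation of a tensor: `multiProd X B = X ×₁ B₁ ×₂ ⋯ ×_N B_N`. -/
noncomputable def multiProd {d : ℕ} {s R : Fin (d+1) → ℕ}
    (X : (∀ i, Fin (s i)) → ℝ) (B : ∀ l, Fin (R l) → Fin (s l) → ℝ) :
    (∀ l, Fin (R l)) → ℝ :=
  fun j => ∑ k : (∀ l, Fin (s l)), X k * ∏ l, B l (j l) (k l)

/-- Dimensions of `partialContract`: modes in `E` are kept at size `s l`,
the other modes are contracted down to size `R l`. -/
def keepDims {d : ℕ} (s R : Fin (d+1) → ℕ) (E : Finset (Fin (d+1))) : Fin (d+1) → ℕ :=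
  fun l => if l ∈ E then s l else R l

/-- Contract every mode `l ∉ E` of `X` with `(A l)ᵀ`; keep the modes in `E` untouched. -/
noncomputable def partialContract {d : ℕ} {s R : Fin (d+1) → ℕ}
    (X : (∀ i, Fin (s i)) → ℝ) (A : ∀ l, Fin (s l) → Fin (R l) → ℝ)
    (E : Finset (Fin (d+1))) : (∀ l, Fin (keepDims s R E l)) → ℝ :=
  multiProd X (fun l a b =>
    if h : l ∈ E then
      (if b = Fin.cast (show keepDims s R E l = s l by simp [keepDims, h]) a then (1:ℝ) else 0)
    else A l b (Fin.cast (show keepDims s R E l = R l by simp [keepDims, h]) a))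


section Helpers

lemma vnorm_nonneg {n : ℕ} (v : Fin n → ℝ) : 0 ≤ vnorm v := Real.sqrt_nonneg _

lemma vnorm_smul {n : ℕ} (c : ℝ) (v : Fin n → ℝ) :
    vnorm (fun i => c * v i) = |c| * vnorm v := by
  unfold vnorm
  rw [← Real.sqrt_sq_eq_abs, ← Real.sqrt_mul (sq_nonneg c)]
  congr 1
  rw [Finset.mul_sum]
  exact Finset.sum_congr rfl fun i _ => by ring

lemma abs_le_vnorm {n : ℕ} (v : Fin n → ℝ) (a : Fin n) : |v a| ≤ vnorm v := by
  rw [← Real.sqrt_sq_eq_abs]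
  exact Real.sqrt_le_sqrt (Finset.single_le_sum (f := fun i => v i ^ 2)
    (fun i _ => sq_nonneg _) (Finset.mem_univ a))

lemma vnorm_cast {m n : ℕ} (h : n = m) (v : Fin m → ℝ) :
    vnorm (fun a : Fin n => v (Fin.cast h a)) = vnorm v := by
  subst h; rfl

lemma vnorm_le_of_abs_le {n : ℕ} (v : Fin n → ℝ) (C : ℝ) (h : ∀ i, |v i| ≤ C) :
    vnorm v ≤ Real.sqrt (n * C ^ 2) := by
  apply Real.sqrt_le_sqrt
  calc ∑ i, v i ^ 2 ≤ ∑ _i : Fin n, C ^ 2 :=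
        Finset.sum_le_sum fun i _ => by
          rw [← sq_abs]; exact pow_le_pow_left₀ (abs_nonneg _) (h i) 2
    _ = n * C ^ 2 := by simp [Finset.sum_const, Finset.card_univ]

end Helpers


section Helpers2

lemma mset_bddAbove {m n : ℕ} (M : Fin m → Fin n → ℝ) :
    BddAbove {r | ∃ x : Fin n → ℝ, vnorm x = 1 ∧ r = vnorm (matvec M x)} := by
  refine ⟨Real.sqrt (m * (∑ i, ∑ j, |M i j|) ^ 2), ?_⟩
  rintro r ⟨x, hx, rfl⟩
  apply vnorm_le_of_abs_le
  intro i
  calc |matvec M x i| ≤ ∑ j, |M i j * x j| := Finset.abs_sum_le_sum_abs _ _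
    _ ≤ ∑ j, |M i j| := Finset.sum_le_sum fun j _ => by
        rw [abs_mul]
        calc |M i j| * |x j| ≤ |M i j| * 1 :=
              mul_le_mul_of_nonneg_left ((abs_le_vnorm x j).trans_eq hx) (abs_nonneg _)
          _ = |M i j| := mul_one _
    _ ≤ ∑ i, ∑ j, |M i j| := Finset.single_le_sum
        (f := fun i => ∑ j, |M i j|) (fun i _ => Finset.sum_nonneg fun j _ => abs_nonneg _)
        (Finset.mem_univ i)

lemma minf_le_mem {m n : ℕ} {M : Fin m → Fin n → ℝ} {x : Fin n → ℝ} (hx : vnorm x = 1) :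
    minf M ≤ vnorm (matvec M x) :=
  csInf_le ⟨0, by rintro r ⟨y, hy, rfl⟩; exact vnorm_nonneg _⟩ ⟨x, hx, rfl⟩

lemma mem_le_mnorm {m n : ℕ} {M : Fin m → Fin n → ℝ} {x : Fin n → ℝ} (hx : vnorm x = 1) :
    vnorm (matvec M x) ≤ mnorm M :=
  le_csSup (mset_bddAbove M) ⟨x, hx, rfl⟩

lemma prod_abs_le_one {d : ℕ} {s : Fin (d+1) → ℕ} {x : ∀ i, Fin (s i) → ℝ}
    (hx : unitInputs x) (j : ∀ i, Fin (s i)) :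
    |∏ k ∈ Finset.univ.erase (0 : Fin (d+1)), x k (j k)| ≤ 1 := by
  rw [Finset.abs_prod]
  apply Finset.prod_le_one (fun k _ => abs_nonneg _)
  intro k hk
  exact (abs_le_vnorm (x k) (j k)).trans_eq (hx k (Finset.mem_erase.1 hk).1)

lemma tset_bddAbove {d : ℕ} {s : Fin (d+1) → ℕ} (T : (∀ i, Fin (s i)) → ℝ) :
    BddAbove {r | ∃ x : (∀ i, Fin (s i) → ℝ), unitInputs x ∧ r = vnorm (gmap T x)} := by
  refine ⟨Real.sqrt (s 0 * (∑ j : (∀ i, Fin (s i)), |T j|) ^ 2), ?_⟩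
  rintro r ⟨x, hx, rfl⟩
  apply vnorm_le_of_abs_le
  intro i₁
  unfold gmap
  refine (Finset.abs_sum_le_sum_abs _ _).trans (Finset.sum_le_sum fun j _ => ?_)
  split
  · rw [abs_mul]
    calc |T j| * |∏ k ∈ Finset.univ.erase (0 : Fin (d+1)), x k (j k)| ≤ |T j| * 1 :=
          mul_le_mul_of_nonneg_left (prod_abs_le_one hx j) (abs_nonneg _)
      _ = |T j| := mul_one _
  · simp

lemma tinf_le_mem {d : ℕ} {s : Fin (d+1) → ℕ} {T : (∀ i, Fin (s i)) → ℝ}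
    {x : ∀ i, Fin (s i) → ℝ} (hx : unitInputs x) :
    tinf T ≤ vnorm (gmap T x) :=
  csInf_le ⟨0, by rintro r ⟨y, hy, rfl⟩; exact vnorm_nonneg _⟩ ⟨x, hx, rfl⟩

lemma mem_le_tnorm {d : ℕ} {s : Fin (d+1) → ℕ} {T : (∀ i, Fin (s i)) → ℝ}
    {x : ∀ i, Fin (s i) → ℝ} (hx : unitInputs x) :
    vnorm (gmap T x) ≤ tnorm T :=
  le_csSup (tset_bddAbove T) ⟨x, hx, rfl⟩

lemma gmap_scale {d : ℕ} {s : Fin (d+1) → ℕ} (T : (∀ i, Fin (s i)) → ℝ)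
    (x x' : ∀ i, Fin (s i) → ℝ) (k : Fin (d+1)) (hk : k ≠ 0) (c : ℝ)
    (h1 : ∀ i, i ≠ k → x i = x' i) (h2 : ∀ a, x k a = c * x' k a) (i₁ : Fin (s 0)) :
    gmap T x i₁ = c * gmap T x' i₁ := by
  unfold gmap
  rw [Finset.mul_sum]
  refine Finset.sum_congr rfl fun j _ => ?_
  rw [mul_ite, mul_zero]
  split
  · have hkmem : k ∈ Finset.univ.erase (0 : Fin (d+1)) :=
      Finset.mem_erase.2 ⟨hk, Finset.mem_univ k⟩
    rw [← Finset.mul_prod_erase _ _ hkmem,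
        ← Finset.mul_prod_erase _ (fun m => x' m (j m)) hkmem, h2]
    rw [Finset.prod_congr rfl (fun m hm => by rw [h1 m (Finset.mem_erase.1 hm).1])]
    ring
  · rfl

end Helpers2


section Core

/-- The lifted inputs: mode `n` gets `Aᵀ (x n)`, other modes are cast. -/
noncomputable def liftInput {d : ℕ} {s : Fin (d+1) → ℕ} (n : Fin (d+1)) {R : ℕ}
    (A : Fin R → Fin (s n) → ℝ) (x : ∀ i, Fin (repl s n R i) → ℝ) :
    ∀ i, Fin (s i) → ℝ :=
  fun i => if h : i = n then
      fun a => ∑ r : Fin R, A r (Fin.cast (congrArg s h) a) *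
        x n (Fin.cast (show R = repl s n R n by simp [repl]) r)
    else
      fun a => x i (Fin.cast (show s i = repl s n R i by simp [repl, h]) a)

/-- The index map used inside `modeProd`. -/
def Jmap {d : ℕ} {s : Fin (d+1) → ℕ} (n : Fin (d+1)) {R : ℕ}
    (j : ∀ i, Fin (repl s n R i)) (k : Fin (s n)) : ∀ i, Fin (s i) :=
  fun i => if h : i = n then Fin.cast (congrArg s h.symm) k
    else Fin.cast (show repl s n R i = s i by simp [repl, h]) (j i)

lemma gmap_modeProd {d : ℕ} {s : Fin (d+1) → ℕ} (T : (∀ i, Fin (s i)) → ℝ)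
    (n : Fin (d+1)) (hn : n ≠ 0) {R : ℕ} (A : Fin R → Fin (s n) → ℝ)
    (x : ∀ i, Fin (repl s n R i) → ℝ) (i₁ : Fin (repl s n R 0)) :
    gmap (modeProd T n A) x i₁ =
      gmap T (liftInput n A x)
        (Fin.cast (show repl s n R 0 = s 0 by simp [repl, (Ne.symm hn)]) i₁) := by
  have hR : repl s n R n = R := by simp [repl]
  have h0 : repl s n R 0 = s 0 := by simp [repl, (Ne.symm hn)]
  have hrepl : ∀ i, i ≠ n → repl s n R i = s i := fun i h => by simp [repl, h]
  have hmemn : n ∈ Finset.univ.erase (0 : Fin (d+1)) :=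
    Finset.mem_erase.2 ⟨hn, Finset.mem_univ n⟩
  have hmode : ∀ j, modeProd T n A j = ∑ k, T (Jmap n j k) * A (Fin.cast hR (j n)) k :=
    fun j => rfl
  have hliftn : ∀ a : Fin (s n), liftInput n A x n a
      = ∑ r : Fin R, A r a * x n (Fin.cast hR.symm r) := by
    intro a
    simp [liftInput]
  have hliftm : ∀ m, ∀ hmn' : m ≠ n, ∀ a : Fin (s m),
      liftInput n A x m a = x m (Fin.cast (show s m = repl s n R m by simp [repl, hmn']) a) := by
    intro m h a
    simp [liftInput, h]
  have lhs : gmap (modeProd T n A) x i₁ =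
      ∑ p : (∀ i, Fin (repl s n R i)) × Fin (s n),
        if p.1 0 = i₁ then
          T (Jmap n p.1 p.2) * (A (Fin.cast hR (p.1 n)) p.2 * x n (p.1 n)) *
            ∏ m ∈ (Finset.univ.erase (0 : Fin (d+1))).erase n, x m (p.1 m)
        else 0 := by
    rw [Fintype.sum_prod_type]
    unfold gmap
    refine Finset.sum_congr rfl fun j _ => ?_
    by_cases hj : j 0 = i₁
    · simp only [if_pos hj, hmode, Finset.sum_mul]
      refine Finset.sum_congr rfl fun k _ => ?_
      rw [← Finset.mul_prod_erase _ _ hmemn]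
      ring
    · simp [hj]
  have rhs : gmap T (liftInput n A x) (Fin.cast h0 i₁) =
      ∑ q : (∀ i, Fin (s i)) × Fin R,
        if q.1 0 = Fin.cast h0 i₁ then
          T q.1 * (A q.2 (q.1 n) * x n (Fin.cast hR.symm q.2)) *
            ∏ m ∈ (Finset.univ.erase (0 : Fin (d+1))).erase n, liftInput n A x m (q.1 m)
        else 0 := by
    rw [Fintype.sum_prod_type]
    unfold gmap
    refine Finset.sum_congr rfl fun j _ => ?_
    by_cases hj : j 0 = Fin.cast h0 i₁
    · simp only [if_pos hj]
      rw [← Finset.mul_prod_erase _ _ hmemn, hliftn, Finset.sum_mul, Finset.mul_sum]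
      refine Finset.sum_congr rfl fun r _ => ?_
      ring
    · simp [hj]
  rw [lhs, rhs]
  refine Fintype.sum_bijective (fun p => (Jmap n p.1 p.2, Fin.cast hR (p.1 n))) ?_ _ _ ?_
  · refine Function.bijective_iff_has_inverse.2 ⟨fun q =>
      (fun i => if h : i = n then Fin.cast (show R = repl s n R i by rw [h]; exact hR.symm) q.2
        else Fin.cast (show s i = repl s n R i from (hrepl i h).symm) (q.1 i), q.1 n), ?_, ?_⟩
    · rintro ⟨j, k⟩
      refine Prod.ext ?_ ?_
      · funext i
        by_cases h : i = n
        · subst h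
          simp [Jmap, Fin.ext_iff]
        · simp [Jmap, h, Fin.ext_iff]
      · simp [Jmap, Fin.ext_iff]
    · rintro ⟨j', r⟩
      refine Prod.ext ?_ ?_
      · funext i
        by_cases h : i = n
        · subst h
          simp [Jmap, Fin.ext_iff]
        · simp [Jmap, h, Fin.ext_iff]
      · simp [Jmap, Fin.ext_iff]
  · rintro ⟨j, k⟩
    have hA : Jmap n j k n = k := by simp [Jmap]
    have hx : Fin.cast hR.symm (Fin.cast hR (j n)) = j n := by simp
    have hcond : (Jmap n j k 0 = Fin.cast h0 i₁) ↔ (j 0 = i₁) := by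
      simp [Jmap, (Ne.symm hn), Fin.ext_iff]
    have hprod : ∏ m ∈ (Finset.univ.erase (0 : Fin (d+1))).erase n,
        liftInput n A x m (Jmap n j k m)
        = ∏ m ∈ (Finset.univ.erase (0 : Fin (d+1))).erase n, x m (j m) := by
      refine Finset.prod_congr rfl fun m hm => ?_
      have hmn : m ≠ n := (Finset.mem_erase.1 hm).1
      rw [hliftm m hmn]
      congr 1
      simp [Jmap, hmn, Fin.ext_iff]
    simp only [hcond, hA, hx, hprod]
  

end Core

section Main

lemma exists_unit_vec {m : ℕ} (hm : 0 < m) : ∃ v : Fin m → ℝ, vnorm v = 1 := by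
  refine ⟨fun a => if a = ⟨0, hm⟩ then 1 else 0, ?_⟩
  unfold vnorm
  have : ∀ a : Fin m, (if a = ⟨0, hm⟩ then (1:ℝ) else 0) ^ 2 = if a = ⟨0, hm⟩ then 1 else 0 := by
    intro a; split <;> norm_num
  rw [Finset.sum_congr rfl fun a _ => this a, Finset.sum_ite_eq' _ _ (fun _ => (1:ℝ))]
  simp

lemma pos_of_unit_vec {m : ℕ} {v : Fin m → ℝ} (hv : vnorm v = 1) : 0 < m := by
  rcases Nat.eq_zero_or_pos m with h | h
  · subst h
    simp [vnorm] at hv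
  · exact h

lemma tensor_cond_aux {d R : ℕ} {s : Fin (d+2) → ℕ}
    (T : (∀ i : Fin (d+2), Fin (s i)) → ℝ)
    (hT : 0 < tinf T)
    (n : Fin (d+2)) (hn : n ≠ 0)
    (M : Fin (s n) → Fin R → ℝ)
    (hM : 0 < minf M) :
    tcond (modeProd T n (fun r k => M k r)) ≤ tcond T * (mnorm M / minf M) := by
  have hR : repl s n R n = R := by simp [repl]
  have h0 : repl s n R 0 = s 0 := by simp [repl, (Ne.symm hn)]
  have hrepl : ∀ i, i ≠ n → repl s n R i = s i := fun i h => by simp [repl, h]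
  -- nonemptiness of the defining sets
  obtain ⟨x₀, hx₀⟩ : ∃ x : (∀ i : Fin (d+2), Fin (s i) → ℝ), unitInputs x := by
    by_contra h
    push_neg at h
    have he : {r | ∃ x : (∀ i : Fin (d+2), Fin (s i) → ℝ),
        unitInputs x ∧ r = vnorm (gmap T x)} = ∅ := by
      ext r
      simp only [Set.mem_setOf_eq, Set.mem_empty_iff_false, iff_false, not_exists]
      rintro x ⟨hx, -⟩
      exact h x hx
    unfold tinf at hT
    rw [he, Real.sInf_empty] at hT
    exact lt_irrefl _ hT
  obtain ⟨y₀, hy₀⟩ : ∃ y : Fin R → ℝ, vnorm y = 1 := by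
    by_contra h
    push_neg at h
    have he : {r | ∃ y : Fin R → ℝ, vnorm y = 1 ∧ r = vnorm (matvec M y)} = ∅ := by
      ext r
      simp only [Set.mem_setOf_eq, Set.mem_empty_iff_false, iff_false, not_exists]
      rintro y ⟨hy, -⟩
      exact h y hy
    unfold minf at hM
    rw [he, Real.sInf_empty] at hM
    exact lt_irrefl _ hM
  have htnorm0 : 0 ≤ tnorm T := (vnorm_nonneg _).trans (mem_le_tnorm hx₀)
  have hmnorm0 : 0 ≤ mnorm M := (vnorm_nonneg _).trans (mem_le_mnorm hy₀)
  -- the key pointwise analysis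
  have key : ∀ x : (∀ i, Fin (repl s n R i) → ℝ), unitInputs x →
      ∃ c : ℝ, minf M ≤ c ∧ c ≤ mnorm M ∧
        ∃ x' : (∀ i : Fin (d+2), Fin (s i) → ℝ), unitInputs x' ∧
          vnorm (gmap (modeProd T n (fun r k => M k r)) x) = c * vnorm (gmap T x') := by
    intro x hx
    have hy : vnorm (fun r => x n (Fin.cast hR.symm r)) = 1 := by
      rw [vnorm_cast hR.symm (x n)]
      exact hx n hn
    set y : Fin R → ℝ := fun r => x n (Fin.cast hR.symm r) with hydef
    set w : Fin (s n) → ℝ := matvec M y with hwdef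
    set c : ℝ := vnorm w with hcdef
    have hc1 : minf M ≤ c := minf_le_mem hy
    have hc2 : c ≤ mnorm M := mem_le_mnorm hy
    have hcpos : 0 < c := lt_of_lt_of_le hM hc1
    have hliftn : ∀ a : Fin (s n), liftInput n (fun r k => M k r) x n a = w a := by
      intro a
      rw [hwdef, hydef]
      simp only [liftInput, matvec]
      rw [dif_pos trivial]
      simp only [Fin.cast_refl, id_eq]
    set x' : ∀ i : Fin (d+2), Fin (s i) → ℝ :=
      Function.update (liftInput n (fun r k => M k r) x) n (fun a => c⁻¹ * w a) with hx'def
    refine ⟨c, hc1, hc2, x', ?_, ?_⟩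
    · intro i hi
      by_cases h : i = n
      · subst h
        rw [hx'def, Function.update_self, vnorm_smul, abs_of_pos (inv_pos.2 hcpos),
          ← hcdef, inv_mul_cancel₀ hcpos.ne']
      · rw [hx'def, Function.update_of_ne h]
        have heq : liftInput n (fun r k => M k r) x i
            = fun a => x i (Fin.cast (show s i = repl s n R i by simp [repl, h]) a) :=
          funext fun a => by simp [liftInput, h]
        rw [heq, vnorm_cast]
        exact hx i hi
    · have hscale : ∀ i₁, gmap T (liftInput n (fun r k => M k r) x) i₁ = c * gmap T x' i₁ := by
        refine gmap_scale T _ _ n hn c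
          (fun i h => by rw [hx'def, Function.update_of_ne h]) (fun a => ?_)
        rw [hliftn a, hx'def, Function.update_self, ← mul_assoc,
          mul_inv_cancel₀ hcpos.ne', one_mul]
      have h1 : gmap (modeProd T n (fun r k => M k r)) x =
          fun i₁ => gmap T (liftInput n (fun r k => M k r) x) (Fin.cast h0 i₁) :=
        funext fun i₁ => gmap_modeProd T n hn (fun r k => M k r) x i₁
      rw [h1, vnorm_cast h0 (gmap T (liftInput n (fun r k => M k r) x)), funext hscale,
        vnorm_smul, abs_of_pos hcpos]
  -- upper bound for the spectral norm
  have upper : tnorm (modeProd T n (fun r k => M k r)) ≤ tnorm T * mnorm M := by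
    unfold tnorm
    apply Real.sSup_le _ (mul_nonneg htnorm0 hmnorm0)
    rintro r ⟨x, hx, rfl⟩
    obtain ⟨c, hc1, hc2, x', hx', heq⟩ := key x hx
    rw [heq, mul_comm (tnorm T)]
    exact mul_le_mul hc2 (mem_le_tnorm hx') (vnorm_nonneg _) hmnorm0
  -- lower bound for I
  have lower : tinf T * minf M ≤ tinf (modeProd T n (fun r k => M k r)) := by
    unfold tinf
    apply le_csInf
    · have hdim : ∀ i : Fin (d+2), i ≠ 0 → 0 < repl s n R i := by
        intro i hi
        by_cases h : i = n
        · rw [h, hR]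
          exact pos_of_unit_vec hy₀
        · rw [hrepl i h]
          exact pos_of_unit_vec (hx₀ i hi)
      have hexists : ∀ i : Fin (d+2), ∃ u : Fin (repl s n R i) → ℝ, i ≠ 0 → vnorm u = 1 := by
        intro i
        by_cases h : i = 0
        · exact ⟨fun _ => 0, fun hi => absurd h hi⟩
        · obtain ⟨v, hv⟩ := exists_unit_vec (hdim i h)
          exact ⟨v, fun _ => hv⟩
      choose xV hxV using hexists
      exact ⟨_, xV, fun i hi => hxV i hi, rfl⟩
    · rintro r ⟨x, hx, rfl⟩
      obtain ⟨c, hc1, hc2, x', hx', heq⟩ := key x hx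
      rw [heq, mul_comm c]
      exact mul_le_mul (tinf_le_mem hx') hc1 hM.le (vnorm_nonneg _)
  have hVinf : 0 < tinf (modeProd T n (fun r k => M k r)) :=
    lt_of_lt_of_le (mul_pos hT hM) lower
  unfold tcond
  rw [div_mul_div_comm]
  exact div_le_div₀ (mul_nonneg htnorm0 hmnorm0) upper (mul_pos hT hM) lower

end Main

/-- Lemma A.1 of the paper. For an order-`N` tensor `T` (`N = d+2`)
with `I(T) > 0` and a matrix `M ∈ ℝ^{s_N×R}`, `R ≤ s_N`, with `I(M) > 0`, the tensor
`V = T ×_N Mᵀ` satisfies `κ(V) ≤ κ(T) κ(M)`. -/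
theorem tensor_cond_submultiplicative {d R : ℕ} {s : Fin (d+2) → ℕ}
    (T : (∀ i : Fin (d+2), Fin (s i)) → ℝ)
    (hT : 0 < tinf T)
    (M : Fin (s (Fin.last (d+1))) → Fin R → ℝ)
    (hRs : R ≤ s (Fin.last (d+1)))
    (hM : 0 < minf M) :
    tcond (modeProd T (Fin.last (d+1)) (fun r k => M k r)) ≤ tcond T * (mnorm M / minf M) := by
  exact tensor_cond_aux T hT (Fin.last (d+1)) (by simp [Fin.ext_iff]) M hM
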